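/- arXiv:1911.04696 — 2 statements merged into one kernel-verified Lean document; each statement's English description precedes it below -/
import Mathlib

section
/- Let (Ω, F, P) be a probability space and, for each n, let A_n, B_n, Ã_n, B̃_n be measurable events with Ã_n ⊆ A_n and B̃_n ⊆ B_n; set E_n = Ã_n ∪ B̃_n. Assume: (i) P(A_n) → p_A and P(B_n) → p_B as n → ∞; (ii) liminf_{n→∞} [ P(A_nᶜ ∩ B̃_n) − P(A_n ∩ Ã_nᶜ ∩ B̃_nᶜ) ] > 0; and (iii) limsup_{n→∞} [ P(B_nᶜ ∩ Ã_n) − P(B_n ∩ B̃_nᶜ ∩ Ã_nᶜ) ] < 0. Then liminf_{n→∞} P(E_n) > p_A and limsup_{n→∞} P(E_n) < p_B. (This is the paper's Theorem 1 stated in event form: the global power of the EMinP test is asymptotically strictly between the global powers of the two component tests, i.e., EMinP has a more balanced global power.) -/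
open MeasureTheory Filter Set Topology

/-! `P(E)` exceeds `P(A)` by what `E` gains outside `A` minus what it loses inside `A`. With
`E = Ã ∪ B̃` and `Ã ⊆ A` these are exactly the two terms in (ii), so
`P(Eₙ) = P(Aₙ) + wₙ` with `liminf wₙ > 0` while `P(Aₙ) → p_A`; the bound by `p_B` is the same
argument with the roles of the two tests exchanged, using (iii). -/

section Measure

variable {Ω : Type*} [MeasurableSpace Ω] (P : Measure Ω)

lemma measureReal_eq_add_sdiff_sub_sdiff [IsFiniteMeasure P] {A E : Set Ω}
    (hA : MeasurableSet A) (hE : MeasurableSet E) :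
    P.real E = P.real A + P.real (E \ A) - P.real (A \ E) := by
  have hEA := measureReal_inter_add_sdiff (μ := P) (s := E) hA
  have hAE := measureReal_inter_add_sdiff (μ := P) (s := A) hE
  rw [inter_comm] at hEA
  linarith

lemma measureReal_union_eq_of_subset [IsFiniteMeasure P] {A Atil Btil : Set Ω}
    (hA : MeasurableSet A) (hE : MeasurableSet (Atil ∪ Btil)) (hsub : Atil ⊆ A) :
    P.real (Atil ∪ Btil) = P.real A + P.real (Aᶜ ∩ Btil) - P.real (A ∩ Atilᶜ ∩ Btilᶜ) := by
  have hgain : (Atil ∪ Btil) \ A = Aᶜ ∩ Btil := by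
    rw [union_sdiff_distrib, sdiff_eq_empty.mpr hsub, empty_union, sdiff_eq, inter_comm]
  have hloss : A \ (Atil ∪ Btil) = A ∩ Atilᶜ ∩ Btilᶜ := by
    rw [sdiff_eq, compl_union, inter_assoc]
  rw [measureReal_eq_add_sdiff_sub_sdiff P hA hE, hgain, hloss]

lemma abs_measureReal_sub_le_one [IsZeroOrProbabilityMeasure P] (s t : Set Ω) :
    |P.real s - P.real t| ≤ 1 :=
  abs_sub_le_of_nonneg_of_le measureReal_nonneg measureReal_le_one
    measureReal_nonneg measureReal_le_one

end Measure

section Limits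

variable {ι : Type*} {f : Filter ι} [f.NeBot] {u v w : ι → ℝ} {p : ℝ}

lemma lt_liminf_of_eq_add_of_tendsto (huvw : ∀ i, u i = v i + w i) (hv : Tendsto v f (𝓝 p))
    (hw : 0 < liminf w f) (hw_bdd : IsBoundedUnder (· ≤ ·) f fun i => |w i|) :
    p < liminf u f := by
  obtain ⟨hw_le, hw_ge⟩ := isBoundedUnder_le_abs.mp hw_bdd
  calc p < liminf v f + liminf w f := by rw [hv.liminf_eq]; linarith
    _ ≤ liminf (v + w) f :=
      le_liminf_add hv.isBoundedUnder_ge hv.isBoundedUnder_le hw_ge hw_le.isCoboundedUnder_ge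
    _ = liminf u f := by rw [show u = v + w from funext huvw]

lemma limsup_lt_of_eq_add_of_tendsto (huvw : ∀ i, u i = v i + w i) (hv : Tendsto v f (𝓝 p))
    (hw : limsup w f < 0) (hw_bdd : IsBoundedUnder (· ≤ ·) f fun i => |w i|) :
    limsup u f < p := by
  obtain ⟨hw_le, hw_ge⟩ := isBoundedUnder_le_abs.mp hw_bdd
  calc limsup u f = limsup (v + w) f := by rw [show u = v + w from funext huvw]
    _ ≤ limsup v f + limsup w f :=
      limsup_add_le hv.isBoundedUnder_ge hv.isBoundedUnder_le hw_ge.isCoboundedUnder_le hw_le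
    _ < p := by rw [hv.limsup_eq]; linarith

end Limits

/-- Theorem 1 (event form): the global power of the EMinP test `E_n = Ã_n ∪ B̃_n` is
asymptotically strictly between the global powers `p_A` and `p_B` of the two
component tests. -/
theorem stmt7 {Ω : Type*} [MeasurableSpace Ω] (P : Measure Ω) [IsProbabilityMeasure P]
    (A B Atil Btil : ℕ → Set Ω)
    (hA : ∀ n, MeasurableSet (A n)) (hB : ∀ n, MeasurableSet (B n))
    (hAtil : ∀ n, MeasurableSet (Atil n)) (hBtil : ∀ n, MeasurableSet (Btil n))
    (hAsub : ∀ n, Atil n ⊆ A n) (hBsub : ∀ n, Btil n ⊆ B n)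
    (pA pB : ℝ)
    (hpA : Tendsto (fun n => (P (A n)).toReal) atTop (nhds pA))
    (hpB : Tendsto (fun n => (P (B n)).toReal) atTop (nhds pB))
    (hii : 0 < Filter.liminf
      (fun n => (P ((A n)ᶜ ∩ Btil n)).toReal - (P (A n ∩ (Atil n)ᶜ ∩ (Btil n)ᶜ)).toReal)
      atTop)
    (hiii : Filter.limsup
      (fun n => (P ((B n)ᶜ ∩ Atil n)).toReal - (P (B n ∩ (Btil n)ᶜ ∩ (Atil n)ᶜ)).toReal)
      atTop < 0) :
    pA < Filter.liminf (fun n => (P (Atil n ∪ Btil n)).toReal) atTop ∧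
    Filter.limsup (fun n => (P (Atil n ∪ Btil n)).toReal) atTop < pB := by
  have hbdd (s t : ℕ → Set Ω) :
      IsBoundedUnder (· ≤ ·) atTop fun n => |P.real (s n) - P.real (t n)| :=
    isBoundedUnder_of ⟨1, fun n => abs_measureReal_sub_le_one P (s n) (t n)⟩
  constructor
  · refine lt_liminf_of_eq_add_of_tendsto (fun n => ?_) hpA hii (hbdd _ _)
    exact (measureReal_union_eq_of_subset P (hA n) ((hAtil n).union (hBtil n)) (hAsub n)).trans
      (add_sub_assoc _ _ _)
  · refine limsup_lt_of_eq_add_of_tendsto (fun n => ?_) hpB hiii (hbdd _ _)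
    rw [union_comm]
    exact (measureReal_union_eq_of_subset P (hB n) ((hBtil n).union (hAtil n)) (hBsub n)).trans
      (add_sub_assoc _ _ _)
end

section
/- Let (Ω, F, P) be a probability space and (W_n), (Ĉ_n) real-valued random variables such that the laws of W_n converge weakly to a probability measure with CDF H that is continuous on ℝ and strictly increasing where it takes values in (0,1), and Ĉ_n converges in probability to the point q with H(q) = α for a fixed α ∈ (0,1). Let (B_n) be measurable events with liminf_{n→∞} P( {W_n ≤ Ĉ_n} ∩ B_nᶜ ) > 0. Then limsup_{n→∞} P( {W_n ≤ Ĉ_n} ∩ B_n ) < α. (This is the paper's Theorem 2 for the procedure φ_{e(3)}: the familywise error rate of the EMinP procedure that requires both the MinP test and the global test to reject is asymptotically strictly below α.) -/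
/-!
Split the event `{W_n ≤ Ĉ_n}` along `B_n`. On its complement it keeps a mass bounded below
by some `δ > 0`, while its total mass is asymptotically at most `H q = α`: for any `t > q`,
`{W_n ≤ Ĉ_n} ⊆ {W_n ≤ t} ∪ {t - q < |Ĉ_n - q|}`, the portmanteau theorem bounds the limsup of
the first probability by `μ (Iic t)`, the second tends to `0`, and `μ (Iic t) → μ (Iic q)` as
`t ↓ q` by right continuity of a distribution function. Hence eventually
`P ({W_n ≤ Ĉ_n} ∩ B_n) ≤ α - δ / 2`.
-/

open MeasureTheory Filter Set Topology
open scoped ENNReal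

lemma tendsto_measure_Iic_nhdsGT (μ : Measure ℝ) [IsFiniteMeasure μ] (q : ℝ) :
    Tendsto (fun t => μ (Iic t)) (𝓝[>] q) (𝓝 (μ (Iic q))) := by
  have hInter : ⋂ r > q, Iic r = Iic q := by
    ext x
    simp only [mem_iInter, mem_Iic]
    exact ⟨le_of_forall_gt_imp_ge_of_dense, fun hx r hr => hx.trans hr.le⟩
  rw [← hInter]
  exact tendsto_measure_biInter_gt (fun _ _ => measurableSet_Iic.nullMeasurableSet)
    (fun _ _ _ hij => Iic_subset_Iic.2 hij) ⟨q + 1, by linarith, measure_ne_top _ _⟩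

lemma exists_gt_measure_Iic_lt {μ : Measure ℝ} [IsFiniteMeasure μ] {q : ℝ} {c : ℝ≥0∞}
    (hc : μ (Iic q) < c) : ∃ t, q < t ∧ μ (Iic t) < c :=
  (((tendsto_measure_Iic_nhdsGT μ q).eventually_lt_const hc).and
    self_mem_nhdsWithin).exists.imp fun _ h => ⟨h.2, h.1⟩

lemma setOf_le_subset_union {Ω : Type*} (W C : Ω → ℝ) (q t : ℝ) :
    {ω | W ω ≤ C ω} ⊆ {ω | W ω ≤ t} ∪ {ω | t - q < |C ω - q|} := by
  intro ω (hω : W ω ≤ C ω)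
  rcases le_or_gt (C ω) t with hCt | htC
  · exact Or.inl (hω.trans hCt)
  · exact Or.inr ((sub_lt_sub_right htC q).trans_le (le_abs_self _))

theorem eventually_measure_le_lt_of_tendsto {ι Ω : Type*} {L : Filter ι} [MeasurableSpace Ω]
    {P : Measure Ω} [IsProbabilityMeasure P] {W C : ι → Ω → ℝ} (hW : ∀ i, AEMeasurable (W i) P)
    {μ : ProbabilityMeasure ℝ}
    (hconv : Tendsto (β := ProbabilityMeasure ℝ)
      (fun i => (⟨P.map (W i), Measure.isProbabilityMeasure_map (hW i)⟩ : ProbabilityMeasure ℝ))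
      L (𝓝 μ))
    {q : ℝ} (hC : ∀ ε > (0 : ℝ), Tendsto (fun i => P {ω | ε < |C i ω - q|}) L (𝓝 0))
    {c : ℝ≥0∞} (hc : (μ : Measure ℝ) (Iic q) < c) :
    ∀ᶠ i in L, P {ω | W i ω ≤ C i ω} < c := by
  obtain ⟨t, hqt, hμt⟩ := exists_gt_measure_Iic_lt hc
  obtain ⟨d, hμd, hdc⟩ := exists_between hμt
  have hlaw : ∀ᶠ i in L, P {ω | W i ω ≤ t} < d := by
    refine (eventually_lt_of_limsup_lt
      ((ProbabilityMeasure.limsup_measure_closed_le_of_tendsto hconv isClosed_Iic).trans_lt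
        hμd)).mono fun i hi => ?_
    rwa [ProbabilityMeasure.coe_mk, Measure.map_apply_of_aemeasurable (hW i) measurableSet_Iic]
      at hi
  have hdev : ∀ᶠ i in L, P {ω | t - q < |C i ω - q|} < c - d :=
    (hC _ (sub_pos.2 hqt)).eventually_lt_const (tsub_pos_of_lt hdc)
  filter_upwards [hlaw, hdev] with i hi hi'
  calc P {ω | W i ω ≤ C i ω}
      ≤ P {ω | W i ω ≤ t} + P {ω | t - q < |C i ω - q|} :=
        (measure_mono (setOf_le_subset_union _ _ q t)).trans (measure_union_le _ _)
    _ < d + (c - d) := ENNReal.add_lt_add hi hi'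
    _ = c := add_tsub_cancel_of_le hdc.le

theorem stmt12_general {Ω : Type*} [MeasurableSpace Ω] (P : Measure Ω) [IsProbabilityMeasure P]
    (W : ℕ → Ω → ℝ) (hW : ∀ n, Measurable (W n))
    (C : ℕ → Ω → ℝ)
    (μ : ProbabilityMeasure ℝ)
    (hconv : Tendsto (β := ProbabilityMeasure ℝ)
      (fun n => (⟨P.map (W n), Measure.isProbabilityMeasure_map (hW n).aemeasurable⟩ :
        ProbabilityMeasure ℝ)) atTop (nhds μ))
    (H : ℝ → ℝ) (hHdef : ∀ t, H t = ((μ : Measure ℝ) (Set.Iic t)).toReal)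
    (α : ℝ)
    (q : ℝ) (hq : H q = α)
    (hC : ∀ ε > (0 : ℝ), Tendsto (fun n => P {ω | ε < |C n ω - q|}) atTop (nhds 0))
    (B : ℕ → Set Ω) (hB : ∀ n, MeasurableSet (B n))
    (hliminf : 0 < Filter.liminf
      (fun n => (P ({ω | W n ω ≤ C n ω} ∩ (B n)ᶜ)).toReal) atTop) :
    Filter.limsup (fun n => (P ({ω | W n ω ≤ C n ω} ∩ B n)).toReal) atTop < α := by
  obtain ⟨δ, hδ, hδL⟩ := exists_between hliminf
  have hcompl : ∀ᶠ n in atTop, δ < (P ({ω | W n ω ≤ C n ω} ∩ (B n)ᶜ)).toReal :=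
    eventually_lt_of_lt_liminf hδL (isBoundedUnder_of ⟨0, fun _ => ENNReal.toReal_nonneg⟩)
  have hμq : (μ : Measure ℝ) (Iic q) < ENNReal.ofReal (α + δ / 2) := by
    have hα : 0 ≤ α := by rw [← hq, hHdef]; positivity
    rw [← ENNReal.ofReal_toReal (measure_ne_top _ _), ← hHdef, hq,
      ENNReal.ofReal_lt_ofReal_iff_of_nonneg hα]
    linarith
  have htotal := eventually_measure_le_lt_of_tendsto (fun n => (hW n).aemeasurable) hconv hC hμq
  have hfwer : ∀ᶠ n in atTop, (P ({ω | W n ω ≤ C n ω} ∩ B n)).toReal ≤ α - δ / 2 := by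
    filter_upwards [hcompl, htotal] with n hcompl_n htotal_n
    have hsplit := measureReal_inter_add_sdiff (μ := P) (s := {ω | W n ω ≤ C n ω}) (hB n)
    simp only [measureReal_def, sdiff_eq] at hsplit
    linarith [ENNReal.toReal_lt_of_lt_ofReal htotal_n]
  exact (limsup_le_of_le (isCoboundedUnder_le_of_le atTop fun _ => ENNReal.toReal_nonneg)
    hfwer).trans_lt (by linarith)

/-- Theorem 2 for `φ_{e(3)}`: the FWER of the EMinP procedure requiring both the MinP
test and the global test to reject is asymptotically strictly below `α`. -/
theorem stmt12 {Ω : Type*} [MeasurableSpace Ω] (P : Measure Ω) [IsProbabilityMeasure P]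
    (W : ℕ → Ω → ℝ) (hW : ∀ n, Measurable (W n))
    (C : ℕ → Ω → ℝ) (hCmeas : ∀ n, Measurable (C n))
    (μ : ProbabilityMeasure ℝ)
    (hconv : Tendsto (β := ProbabilityMeasure ℝ)
      (fun n => (⟨P.map (W n), Measure.isProbabilityMeasure_map (hW n).aemeasurable⟩ :
        ProbabilityMeasure ℝ)) atTop (nhds μ))
    (H : ℝ → ℝ) (hHdef : ∀ t, H t = ((μ : Measure ℝ) (Set.Iic t)).toReal)
    (hHcont : Continuous H)
    (hHmono : StrictMonoOn H {t | H t ∈ Set.Ioo (0 : ℝ) 1})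
    (α : ℝ) (hα : α ∈ Set.Ioo (0 : ℝ) 1)
    (q : ℝ) (hq : H q = α)
    (hC : ∀ ε > (0 : ℝ), Tendsto (fun n => P {ω | ε < |C n ω - q|}) atTop (nhds 0))
    (B : ℕ → Set Ω) (hB : ∀ n, MeasurableSet (B n))
    (hliminf : 0 < Filter.liminf
      (fun n => (P ({ω | W n ω ≤ C n ω} ∩ (B n)ᶜ)).toReal) atTop) :
    Filter.limsup (fun n => (P ({ω | W n ω ≤ C n ω} ∩ B n)).toReal) atTop < α :=
  stmt12_general P W hW C μ hconv H hHdef α q hq hC B hB hliminf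
end
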